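/- Let U, H be integers with 2 ≤ U ≤ H+1, α = 1/U, and B*_{α,H} the Vaaler kernel with Fourier coefficients B̂*_{α,H}(h) = (1/(H+1))(1 - |h|/(H+1))cos(πhα) for |h| ≤ H and 0 otherwise. Then Σ_{0≤u<U} (B*_{α,H} ∗ B*_{α,H})(u/U) ≤ 1/(H+1). -/

import Mathlib

/-!
Multiplying out and integrating over a period, `B* ∗ B*` is the trigonometric polynomial with
coefficients `B̂*(h)²`. Summing it over the points `u / U` kills every frequency except the
multiples `h = kU`, each counted `U` times, and there `cos (π h / U)² = 1`. With `n = H + 1` and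
`K = ⌊H / U⌋` the sum is therefore `U / n⁴ · Σ_{|k| ≤ K} (n - |k| U)²`. Writing `n = K U + a`,
`3 (n³ - U Σ_{|k| ≤ K} (n - |k| U)²) = (K - 1) K (K + 1) U³ + 3 K² U² a + 3 (K - 1) U a² + 3 a³`,
which is nonnegative: for `K ≥ 1` termwise, and for `K = 0` because then `a = n ≥ U`.
-/

open intervalIntegral ComplexOrder

/-- Fourier coefficients of the Vaaler majorant kernel `B*_{α,H}`. -/
noncomputable def BStarHat (α : ℝ) (H : ℕ) (h : ℤ) : ℝ :=
  (1 / ((H : ℝ) + 1)) * (1 - |(h : ℝ)| / ((H : ℝ) + 1)) * Real.cos (Real.pi * h * α)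

/-- The Vaaler majorant kernel `B*_{α,H}(x) = Σ_{|h|≤H} B̂*_{α,H}(h) e(hx)`. -/
noncomputable def BStar (α : ℝ) (H : ℕ) (x : ℝ) : ℂ :=
  ∑ h ∈ Finset.Icc (-(H : ℤ)) (H : ℤ),
    (BStarHat α H h : ℂ) * Complex.exp (2 * Real.pi * Complex.I * h * x)

open Complex Finset
open scoped Real

lemma integral_exp_two_pi_I_int_mul (m : ℤ) :
    ∫ t in (-(1 / 2) : ℝ)..(1 / 2), exp (2 * π * I * m * t) = if m = 0 then 1 else 0 := by
  split_ifs with hm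
  · norm_num [hm]
  · have hc : 2 * π * I * m ≠ 0 := by simp [Real.pi_ne_zero, I_ne_zero, hm]
    have h_periodic :
        exp (2 * π * I * m * ↑(1 / 2 : ℝ)) = exp (2 * π * I * m * ↑(-(1 / 2) : ℝ)) := by
      rw [← mul_one (exp (_ * ↑(-(1 / 2) : ℝ))), ← exp_int_mul_two_pi_mul_I m, ← exp_add]
      push_cast
      ring_nf
    rw [integral_exp_mul_complex hc, h_periodic, sub_self, zero_div]

lemma integral_trigPolynomial_conv (S : Finset ℤ) (a b : ℤ → ℂ) (x : ℝ) :
    ∫ t in (-(1 / 2) : ℝ)..(1 / 2),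
      (∑ h ∈ S, a h * exp (2 * π * I * h * ↑(x - t))) * ∑ h ∈ S, b h * exp (2 * π * I * h * t)
      = ∑ h ∈ S, a h * b h * exp (2 * π * I * h * x) := by
  have h_expand : ∀ t : ℝ,
      (∑ h ∈ S, a h * exp (2 * π * I * h * ↑(x - t))) * ∑ h ∈ S, b h * exp (2 * π * I * h * t)
        = ∑ h ∈ S, ∑ h' ∈ S,
            a h * b h' * exp (2 * π * I * h * x) * exp (2 * π * I * ↑(h' - h) * t) := by
    intro t
    rw [sum_mul_sum]
    refine sum_congr rfl fun h _ => sum_congr rfl fun h' _ => ?_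
    rw [mul_mul_mul_comm, ← exp_add, mul_assoc (a h * b h'), ← exp_add]
    push_cast
    ring_nf
  simp_rw [h_expand]
  rw [integral_finsetSum fun h _ => (by fun_prop : Continuous _).intervalIntegrable _ _]
  refine sum_congr rfl fun h hh => ?_
  rw [integral_finsetSum fun h' _ => (by fun_prop : Continuous _).intervalIntegrable _ _]
  simp_rw [integral_const_mul, integral_exp_two_pi_I_int_mul, sub_eq_zero,
    mul_ite, mul_one, mul_zero]
  rw [sum_ite_eq' S h, if_pos hh]

lemma sum_range_exp_two_pi_I_mul_div {U : ℕ} (hU : U ≠ 0) (h : ℤ) :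
    ∑ u ∈ range U, exp (2 * π * I * h * ↑((u : ℝ) / U))
      = if (U : ℤ) ∣ h then (U : ℂ) else 0 := by
  set ζ := exp (2 * π * I / U)
  have hζ : IsPrimitiveRoot ζ U := isPrimitiveRoot_exp U hU
  have h_pow : ∀ u : ℕ, exp (2 * π * I * h * ↑((u : ℝ) / U)) = (ζ ^ h) ^ u := by
    intro u
    rw [← exp_int_mul, ← exp_nat_mul]
    push_cast
    ring_nf
  simp_rw [h_pow]
  split_ifs with hdvd
  · simp [(hζ.zpow_eq_one_iff_dvd h).2 hdvd]
  · have hz : ζ ^ h ≠ 1 := mt (hζ.zpow_eq_one_iff_dvd h).1 hdvd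
    have hzU : (ζ ^ h) ^ U = 1 := by
      rw [← zpow_natCast, ← zpow_mul, mul_comm h, zpow_mul, zpow_natCast, hζ.pow_eq_one, one_zpow]
    rw [geom_sum_eq hz, hzU, sub_self, zero_div]

lemma sum_filter_dvd_Icc {M : Type*} [AddCommMonoid M] (f : ℤ → M) {U : ℕ} (hU : 0 < U)
    (H : ℕ) :
    ∑ h ∈ (Icc (-(H : ℤ)) H).filter ((U : ℤ) ∣ ·), f h
      = ∑ k ∈ Icc (-((H / U : ℕ) : ℤ)) (H / U : ℕ), f (k * U) := by
  have hU' : (0 : ℤ) < U := by exact_mod_cast hU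
  have h_image : (Icc (-(H : ℤ)) H).filter ((U : ℤ) ∣ ·)
      = (Icc (-((H / U : ℕ) : ℤ)) (H / U : ℕ)).image (· * (U : ℤ)) := by
    ext h
    simp only [mem_filter, mem_Icc, mem_image, Int.natCast_div]
    constructor
    · rintro ⟨⟨hlo, hhi⟩, k, rfl⟩
      refine ⟨k, ⟨?_, ?_⟩, mul_comm _ _⟩
      · rw [neg_le, Int.le_ediv_iff_mul_le hU']
        linarith
      · rw [Int.le_ediv_iff_mul_le hU']
        linarith
    · rintro ⟨k, ⟨hlo, hhi⟩, rfl⟩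
      rw [neg_le, Int.le_ediv_iff_mul_le hU'] at hlo
      rw [Int.le_ediv_iff_mul_le hU'] at hhi
      exact ⟨⟨by linarith, hhi⟩, dvd_mul_left _ _⟩
  rw [h_image, sum_image fun k _ l _ hkl => mul_right_cancel₀ hU'.ne' hkl]

lemma sq_BStarHat_one_div_mul {U : ℕ} (hU : U ≠ 0) (H : ℕ) (k : ℤ) :
    BStarHat (1 / U) H (k * U) ^ 2 = ((H + 1) - |(k : ℝ)| * U) ^ 2 / ((H : ℝ) + 1) ^ 4 := by
  have hcos : Real.cos (π * ↑(k * U : ℤ) * (1 / U)) ^ 2 = 1 := by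
    rw [← sq_abs, show π * ↑(k * U : ℤ) * (1 / U) = k * π by push_cast; field_simp,
      Real.abs_cos_int_mul_pi, one_pow]
  rw [BStarHat, mul_pow, hcos, mul_one]
  push_cast
  rw [abs_mul, Nat.abs_cast]
  field_simp

lemma sum_Icc_sq_sub_abs_mul (n u : ℝ) (K : ℕ) :
    ∑ k ∈ Icc (-(K : ℤ)) K, (n - |(k : ℝ)| * u) ^ 2
      = (2 * K + 1) * n ^ 2 - 2 * u * n * K * (K + 1) + u ^ 2 * K * (K + 1) * (2 * K + 1) / 3 := by
  induction K with
  | zero => simp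
  | succ K ih =>
    have h_Icc : Icc (-((K + 1 : ℕ) : ℤ)) (K + 1 : ℕ)
        = insert (-((K : ℤ) + 1)) (insert ((K : ℤ) + 1) (Icc (-(K : ℤ)) K)) := by
      ext x
      simp only [mem_Icc, mem_insert]
      omega
    rw [h_Icc, sum_insert (by simp only [mem_insert, mem_Icc]; omega),
      sum_insert (by simp only [mem_Icc]; omega), ih]
    push_cast
    rw [abs_neg, abs_of_nonneg (by positivity)]
    ring

lemma mul_sum_Icc_sq_sub_abs_mul_le {n u : ℝ} {K : ℕ} (hu : 0 ≤ u) (hKn : K * u ≤ n)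
    (hun : u ≤ n) :
    u * ∑ k ∈ Icc (-(K : ℤ)) K, (n - |(k : ℝ)| * u) ^ 2 ≤ n ^ 3 := by
  rw [sum_Icc_sq_sub_abs_mul]
  obtain ⟨a, ha, rfl⟩ : ∃ a, 0 ≤ a ∧ n = K * u + a := ⟨n - K * u, by linarith, by ring⟩
  rcases K.eq_zero_or_pos with rfl | hK
  · simp only [CharP.cast_eq_zero, zero_mul, zero_add] at hun ⊢
    linear_combination mul_nonneg (sq_nonneg a) (sub_nonneg.2 hun)
  · have hK1 : (0 : ℝ) ≤ K - 1 := by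
      rw [sub_nonneg]
      exact_mod_cast hK
    have h_nonneg : 0 ≤ (K - 1) * K * (K + 1) * u ^ 3 + 3 * K ^ 2 * u ^ 2 * a
        + 3 * (K - 1) * u * a ^ 2 + 3 * a ^ 3 := by
      positivity
    linear_combination h_nonneg / 3

lemma natCast_mul_sum_sq_BStarHat_le {U H : ℕ} (hU : U ≠ 0) (hH : U ≤ H + 1) :
    U * ∑ k ∈ Icc (-((H / U : ℕ) : ℤ)) (H / U : ℕ), BStarHat (1 / U) H (k * U) ^ 2
      ≤ 1 / ((H : ℝ) + 1) := by
  have hKn : ((H / U : ℕ) : ℝ) * U ≤ H + 1 := by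
    exact_mod_cast (Nat.div_mul_le_self H U).trans H.le_succ
  have h_sum := mul_sum_Icc_sq_sub_abs_mul_le (Nat.cast_nonneg U) hKn (by exact_mod_cast hH)
  have hn : (0 : ℝ) < H + 1 := by positivity
  simp_rw [sq_BStarHat_one_div_mul hU, ← sum_div, mul_div_assoc',
    div_le_div_iff₀ (pow_pos hn 4) hn]
  linear_combination (H + 1 : ℝ) * h_sum

/-- For `2 ≤ U ≤ H+1` and `α = 1/U`,
`Σ_{0≤u<U} (B*_{α,H} ∗ B*_{α,H})(u/U) ≤ 1/(H+1)` (the sum is a real number). -/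
theorem BStar_convolution_BStar_sum (U H : ℕ) (hU : 2 ≤ U) (hH : U ≤ H + 1) :
    ∑ u ∈ Finset.range U,
      (∫ t in (-(1 / 2) : ℝ)..(1 / 2), BStar (1 / U) H ((u : ℝ) / U - t) * BStar (1 / U) H t)
      ≤ 1 / ((H : ℂ) + 1) := by
  have hU0 : U ≠ 0 := by omega
  calc ∑ u ∈ range U,
        (∫ t in (-(1 / 2) : ℝ)..(1 / 2), BStar (1 / U) H ((u : ℝ) / U - t) * BStar (1 / U) H t)
      = ∑ h ∈ Icc (-(H : ℤ)) H, (BStarHat (1 / U) H h : ℂ) ^ 2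
          * ∑ u ∈ range U, exp (2 * π * I * h * ↑((u : ℝ) / U)) := by
        simp_rw [BStar, integral_trigPolynomial_conv, ← sq, mul_sum]
        exact sum_comm
    _ = ((U * ∑ k ∈ Icc (-((H / U : ℕ) : ℤ)) (H / U : ℕ), BStarHat (1 / U) H (k * U) ^ 2 : ℝ)
          : ℂ) := by
        simp_rw [sum_range_exp_two_pi_I_mul_div hU0, mul_ite, mul_zero, ← sum_filter,
          sum_filter_dvd_Icc _ (Nat.pos_of_ne_zero hU0), mul_sum]
        push_cast
        exact sum_congr rfl fun k _ => mul_comm _ _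
    _ ≤ 1 / ((H : ℂ) + 1) := by
        have h_real := real_le_real.2 (natCast_mul_sum_sq_BStarHat_le hU0 hH)
        rwa [ofReal_div, ofReal_one, ofReal_add, ofReal_natCast, ofReal_one] at h_real
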